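/- For any wiring diagrams φ : X → Y and ψ : Y → Z and any mode m-free setting, the dependent-product input maps satisfy, for all z ∈ Z_in‾ and x ∈ X_out‾: (ψ∘φ)_in‾(z, x) = φ_in‾( ψ_in‾(z, φ_out‾(x)), x ), where φ_out‾ : X_out‾ → Y_out‾ is the dependent product of φ_out. -/

import Mathlib

/-- A typed finite set: a finite set together with a typing function to `Type`. -/
structure TFS where
  carrier : Type
  fintype : Fintype carrier
  typ : carrier → Type

/-- A typed function between typed finite sets. -/
def TFS.hom (A B : TFS) : Type :=
  {q : A.carrier → B.carrier // ∀ a, B.typ (q a) = A.typ a}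

/-- Disjoint union of typed finite sets. -/
def TFS.sum (A B : TFS) : TFS :=
  letI := A.fintype; letI := B.fintype
  ⟨A.carrier ⊕ B.carrier, inferInstance, Sum.elim A.typ B.typ⟩

/-- The empty typed finite set `(∅, !)`. -/
def TFS.empty : TFS :=
  ⟨PEmpty, inferInstance, fun x => PEmpty.elim x⟩

namespace TFS.hom

def id (A : TFS) : TFS.hom A A := ⟨fun a => a, fun _ => rfl⟩

def comp {A B C : TFS} (g : TFS.hom B C) (f : TFS.hom A B) : TFS.hom A C :=
  ⟨fun a => g.1 (f.1 a), fun a => (g.2 (f.1 a)).trans (f.2 a)⟩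

def sumMap {A B C D : TFS} (f : TFS.hom A B) (g : TFS.hom C D) :
    TFS.hom (A.sum C) (B.sum D) :=
  ⟨Sum.map f.1 g.1, by
    rintro (a | c)
    · exact f.2 a
    · exact g.2 c⟩

def fold {A B : TFS} : TFS.hom ((A.sum B).sum B) (A.sum B) :=
  ⟨Sum.elim (fun x => x) Sum.inr, by rintro ((a | b) | b) <;> rfl⟩

def inl {A B : TFS} : TFS.hom A (A.sum B) := ⟨Sum.inl, fun _ => rfl⟩

def inr {A B : TFS} : TFS.hom B (A.sum B) := ⟨Sum.inr, fun _ => rfl⟩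

def shuffle {A B C D : TFS} :
    TFS.hom ((A.sum B).sum (C.sum D)) ((A.sum C).sum (B.sum D)) :=
  ⟨fun x => match x with
    | .inl (.inl a) => .inl (.inl a)
    | .inl (.inr b) => .inr (.inl b)
    | .inr (.inl c) => .inl (.inr c)
    | .inr (.inr d) => .inr (.inr d),
   by rintro ((a | b) | (c | d)) <;> rfl⟩

def assocHom {A B C : TFS} : TFS.hom ((A.sum B).sum C) (A.sum (B.sum C)) :=
  ⟨fun x => match x with
    | .inl (.inl a) => .inl a
    | .inl (.inr b) => .inr (.inl b)
    | .inr c => .inr (.inr c),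
   by rintro ((a | b) | c) <;> rfl⟩

def assocInvHom {A B C : TFS} : TFS.hom (A.sum (B.sum C)) ((A.sum B).sum C) :=
  ⟨fun x => match x with
    | .inl a => .inl (.inl a)
    | .inr (.inl b) => .inl (.inr b)
    | .inr (.inr c) => .inr c,
   by rintro (a | (b | c)) <;> rfl⟩

end TFS.hom

/-- The dependent product `Ā = ∏_{a ∈ A} τ(a)` of a typed finite set. -/
def TFS.prod (A : TFS) : Type := (a : A.carrier) → A.typ a

/-- The contravariant action of a typed function on dependent products. -/
def TFS.hom.prodMap {A B : TFS} (q : TFS.hom A B) (f : B.prod) : A.prod :=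
  fun a => cast (q.2 a) (f (q.1 a))

def TFS.pair {A B : TFS} (f : A.prod) (g : B.prod) : (A.sum B).prod :=
  fun x => match x with
  | .inl a => f a
  | .inr b => g b

def TFS.fst {A B : TFS} (f : (A.sum B).prod) : A.prod := fun a => f (Sum.inl a)

def TFS.snd {A B : TFS} (f : (A.sum B).prod) : B.prod := fun b => f (Sum.inr b)

/-- A box: a pair of typed finite sets of input and output ports. -/
structure Box where
  inp : TFS
  out : TFS

/-- Disjoint union of boxes. -/
def Box.tensor (X Y : Box) : Box := ⟨X.inp.sum Y.inp, X.out.sum Y.out⟩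

/-- The empty box `(∅, ∅)`. -/
def Box.unit : Box := ⟨TFS.empty, TFS.empty⟩

/-- A wiring diagram `φ : X → Y`. -/
structure WD (X Y : Box) where
  win : TFS.hom X.inp (Y.inp.sum X.out)
  wout : TFS.hom Y.out X.out

/-- The identity wiring diagram. -/
def WD.id (X : Box) : WD X X := ⟨TFS.hom.inl, TFS.hom.id X.out⟩

/-- Composition of wiring diagrams: `WD.comp ψ φ` is `ψ ∘ φ`. -/
def WD.comp {X Y Z : Box} (ψ : WD Y Z) (φ : WD X Y) : WD X Z where
  win := TFS.hom.fold.comp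
    ((((TFS.hom.id Z.inp).sumMap φ.wout).sumMap (TFS.hom.id X.out)).comp
      ((ψ.win.sumMap (TFS.hom.id X.out)).comp φ.win))
  wout := φ.wout.comp ψ.wout

/-- Disjoint union of wiring diagrams. -/
def WD.tensor {X X' Y Y' : Box} (φ : WD X Y) (φ' : WD X' Y') :
    WD (X.tensor X') (Y.tensor Y') where
  win := TFS.hom.shuffle.comp (φ.win.sumMap φ'.win)
  wout := φ.wout.sumMap φ'.wout

/-- A modal box: a mode set together with an interface function. -/
structure ModalBox where
  mode : Type
  box : mode → Box

/-- A mode-dependent network `(ε, σ) : (M, X) → (N, Y)`; the typing of `ε`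
encodes `dom (ε m) = X m` and `cod (ε m) = Y (σ m)`. -/
structure MDNHom (A B : ModalBox) where
  σ : A.mode → B.mode
  ε : (m : A.mode) → WD (A.box m) (B.box (σ m))

def MDNId (A : ModalBox) : MDNHom A A := ⟨fun m => m, fun m => WD.id (A.box m)⟩

/-- `MDNComp g f` is the composite `g ∘ f` in MDN. -/
def MDNComp {A B C : ModalBox} (g : MDNHom B C) (f : MDNHom A B) : MDNHom A C :=
  ⟨fun m => g.σ (f.σ m), fun m => WD.comp (g.ε (f.σ m)) (f.ε m)⟩

/-- Monoidal product of modal boxes. -/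
def ModalBox.tensor (A B : ModalBox) : ModalBox :=
  ⟨A.mode × B.mode, fun p => (A.box p.1).tensor (B.box p.2)⟩

/-- The monoidal unit `({∗}, ∅)` of MDN. -/
def ModalBox.unit : ModalBox := ⟨PUnit, fun _ => Box.unit⟩

/-- Monoidal product of mode-dependent networks. -/
def MDNTensorHom {A A' B B' : ModalBox} (f : MDNHom A A') (g : MDNHom B B') :
    MDNHom (A.tensor B) (A'.tensor B') :=
  ⟨fun p => (f.σ p.1, g.σ p.2), fun p => (f.ε p.1).tensor (g.ε p.2)⟩

/-- A modal dynamical system on a modal box. -/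
structure MDS (A : ModalBox) where
  S : Type
  q : S → A.mode
  fIn : (s : S) → (A.box (q s)).inp.prod → S
  fOut : (s : S) → (A.box (q s)).out.prod

/-- The action of `P` on a morphism of MDN. -/
def MDS.map {A B : ModalBox} (h : MDNHom A B) (D : MDS A) : MDS B where
  S := D.S
  q := fun s => h.σ (D.q s)
  fIn := fun s y => D.fIn s ((h.ε (D.q s)).win.prodMap (TFS.pair y (D.fOut s)))
  fOut := fun s => (h.ε (D.q s)).wout.prodMap (D.fOut s)


/-- The dependent-product input map `φ_in‾ : Y_in‾ × X_out‾ → X_in‾`. -/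
def WD.dynIn {X Y : Box} (φ : WD X Y) (z : Y.inp.prod) (x : X.out.prod) :
    X.inp.prod :=
  φ.win.prodMap (TFS.pair z x)

/-- The dependent-product output map `φ_out‾ : X_out‾ → Y_out‾`. -/
def WD.dynOut {X Y : Box} (φ : WD X Y) (x : X.out.prod) : Y.out.prod :=
  φ.wout.prodMap x

namespace TFS.hom

theorem prodMap_id {A : TFS} (h : A.prod) : (id A).prodMap h = h := rfl

theorem prodMap_comp {A B C : TFS} (g : TFS.hom B C) (f : TFS.hom A B) (h : C.prod) :
    (g.comp f).prodMap h = f.prodMap (g.prodMap h) :=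
  funext fun _ => (cast_cast _ _ _).symm

theorem sumMap_prodMap_pair {A B C D : TFS} (f : TFS.hom A B) (g : TFS.hom C D)
    (h : B.prod) (k : D.prod) :
    (f.sumMap g).prodMap (TFS.pair h k) = TFS.pair (f.prodMap h) (g.prodMap k) := by
  funext a
  rcases a with a | c <;> rfl

theorem fold_prodMap_pair {A B : TFS} (h : A.prod) (k : B.prod) :
    fold.prodMap (TFS.pair h k) = TFS.pair (TFS.pair h k) k := by
  funext a
  rcases a with (a | b) | b <;> rfl

end TFS.hom

/-- for composable wiring diagrams,
`(ψ∘φ)_in‾(z, x) = φ_in‾(ψ_in‾(z, φ_out‾(x)), x)`. -/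
theorem comp_update {X Y Z : Box} (φ : WD X Y) (ψ : WD Y Z)
    (z : Z.inp.prod) (x : X.out.prod) :
    (WD.comp ψ φ).dynIn z x = φ.dynIn (ψ.dynIn z (φ.dynOut x)) x := by
  simp only [WD.dynIn, WD.dynOut, WD.comp, TFS.hom.prodMap_comp, TFS.hom.fold_prodMap_pair,
    TFS.hom.sumMap_prodMap_pair, TFS.hom.prodMap_id]
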